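/- Let E be a real normed vector space, let F : E → ℝ be twice continuously differentiable, let ρ ∈ ℝ, and define G : E → ℝ by G(x) = σ(F(x) − ρ), where σ(x) = 1/(1+exp(−x)) is the sigmoid function. Fix a point w ∈ E and constants L_c, L_s ≥ 0 such that ‖DF(w)‖ ≤ L_c (operator norm of the first Fréchet derivative) and ‖D²F(w)‖ ≤ L_s (operator norm of the second Fréchet derivative as a continuous bilinear map). Then ‖D²G(w)‖ ≤ L_c²/4 + q·L_s, where q = σ(F(w)−ρ)·(1−σ(F(w)−ρ)). -/

import Mathlib

/-!
Writing `G = σ ∘ f` with `f = F - ρ`, the second-order chain rule gives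
`D²G(w) = σ'(f w) • D²F(w) + σ''(f w) • DF(w) ⊗ DF(w)`. Since `σ' = σ (1 - σ)` and
`σ'' = σ (1 - σ) (1 - 2σ)` with `0 < σ < 1`, we have `|σ''| ≤ 1/4`, and the triangle inequality
for the operator norm gives the bound.
-/

noncomputable def sigmoid (x : ℝ) : ℝ := 1 / (1 + Real.exp (-x))

section SecondOrderChainRule

variable {𝕜 E : Type*} [NontriviallyNormedField 𝕜] [NormedAddCommGroup E] [NormedSpace 𝕜 E]
  {φ φ' : 𝕜 → 𝕜} {c : 𝕜} {f : E → 𝕜} {w : E}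

theorem fderiv_fderiv_comp_eq (hφ : ∀ y, HasDerivAt φ (φ' y) y) (hφ' : HasDerivAt φ' c (f w))
    (hf : Differentiable 𝕜 f) (hf' : DifferentiableAt 𝕜 (fderiv 𝕜 f) w) :
    fderiv 𝕜 (fderiv 𝕜 (fun x => φ (f x))) w =
      φ' (f w) • fderiv 𝕜 (fderiv 𝕜 f) w + (c • fderiv 𝕜 f w).smulRight (fderiv 𝕜 f w) := by
  have hDφf : fderiv 𝕜 (fun x => φ (f x)) = fun x => φ' (f x) • fderiv 𝕜 f x :=
    funext fun x => ((hφ (f x)).comp_hasFDerivAt x (hf x).hasFDerivAt).fderiv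
  rw [hDφf]
  exact ((hφ'.comp_hasFDerivAt w (hf w).hasFDerivAt).smul hf'.hasFDerivAt).fderiv

theorem norm_fderiv_fderiv_comp_le (hφ : ∀ y, HasDerivAt φ (φ' y) y)
    (hφ' : HasDerivAt φ' c (f w)) (hf : Differentiable 𝕜 f)
    (hf' : DifferentiableAt 𝕜 (fderiv 𝕜 f) w) :
    ‖fderiv 𝕜 (fderiv 𝕜 (fun x => φ (f x))) w‖ ≤
      ‖c‖ * ‖fderiv 𝕜 f w‖ ^ 2 + ‖φ' (f w)‖ * ‖fderiv 𝕜 (fderiv 𝕜 f) w‖ := by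
  rw [fderiv_fderiv_comp_eq hφ hφ' hf hf']
  set L := fderiv 𝕜 f w
  set B := fderiv 𝕜 (fderiv 𝕜 f) w
  calc ‖φ' (f w) • B + (c • L).smulRight L‖ ≤ ‖φ' (f w) • B‖ + ‖(c • L).smulRight L‖ :=
        norm_add_le (E := E →L[𝕜] E →L[𝕜] 𝕜) _ _
    _ ≤ ‖φ' (f w)‖ * ‖B‖ + ‖c‖ * ‖L‖ * ‖L‖ := by
        rw [ContinuousLinearMap.norm_smulRight_apply]
        gcongr <;> exact ContinuousLinearMap.opNorm_smul_le _ _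
    _ = ‖c‖ * ‖L‖ ^ 2 + ‖φ' (f w)‖ * ‖B‖ := by ring

end SecondOrderChainRule

theorem sigmoid_eq_real_sigmoid : sigmoid = Real.sigmoid :=
  funext fun _ => one_div _

theorem hasDerivAt_sigmoid (x : ℝ) : HasDerivAt sigmoid (sigmoid x * (1 - sigmoid x)) x := by
  rw [sigmoid_eq_real_sigmoid]
  exact Real.hasDerivAt_sigmoid x

theorem hasDerivAt_sigmoid_mul_one_sub (x : ℝ) :
    HasDerivAt (fun y => sigmoid y * (1 - sigmoid y))
      (sigmoid x * (1 - sigmoid x) * (1 - 2 * sigmoid x)) x := by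
  refine ((hasDerivAt_sigmoid x).mul ((hasDerivAt_sigmoid x).const_sub 1)).congr_deriv ?_
  ring

theorem sigmoid_mul_one_sub_nonneg (x : ℝ) : 0 ≤ sigmoid x * (1 - sigmoid x) := by
  rw [sigmoid_eq_real_sigmoid]
  exact mul_nonneg (Real.sigmoid_nonneg x) (sub_nonneg.2 (Real.sigmoid_le_one x))

theorem abs_sigmoid_second_deriv_le (x : ℝ) :
    |sigmoid x * (1 - sigmoid x) * (1 - 2 * sigmoid x)| ≤ 1 / 4 := by
  rw [sigmoid_eq_real_sigmoid, abs_le]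
  have h0 := Real.sigmoid_nonneg x
  have h1 := Real.sigmoid_le_one x
  constructor <;> nlinarith [sq_nonneg (Real.sigmoid x - 1 / 2), mul_nonneg h0 (sub_nonneg.2 h1)]

theorem maxfl_local_smoothness_general
    {E : Type*} [NormedAddCommGroup E] [NormedSpace ℝ E]
    (F : E → ℝ) (hF : ContDiff ℝ 2 F) (ρ : ℝ) (w : E)
    (Lc Ls : ℝ)
    (h1 : ‖fderiv ℝ F w‖ ≤ Lc)
    (h2 : ‖fderiv ℝ (fderiv ℝ F) w‖ ≤ Ls) :
    ‖fderiv ℝ (fderiv ℝ (fun x => sigmoid (F x - ρ))) w‖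
      ≤ Lc ^ 2 / 4 + sigmoid (F w - ρ) * (1 - sigmoid (F w - ρ)) * Ls := by
  have hDF : fderiv ℝ (fun x => F x - ρ) = fderiv ℝ F := funext fun _ => fderiv_sub_const ρ
  have hF' : DifferentiableAt ℝ (fderiv ℝ F) w :=
    (hF.fderiv_right le_rfl).differentiable one_ne_zero w
  have hbound := norm_fderiv_fderiv_comp_le (f := fun x => F x - ρ) hasDerivAt_sigmoid
    (hasDerivAt_sigmoid_mul_one_sub (F w - ρ))
    ((hF.differentiable two_ne_zero).sub_const ρ) (hDF ▸ hF')
  rw [hDF, Real.norm_eq_abs, Real.norm_eq_abs, abs_of_nonneg (sigmoid_mul_one_sub_nonneg _)]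
    at hbound
  refine hbound.trans ?_
  have hDF_sq : ‖fderiv ℝ F w‖ ^ 2 ≤ Lc ^ 2 := pow_le_pow_left₀ (norm_nonneg _) h1 2
  calc _ ≤ 1 / 4 * Lc ^ 2 + sigmoid (F w - ρ) * (1 - sigmoid (F w - ρ)) * Ls := by
        gcongr
        · exact abs_sigmoid_second_deriv_le _
        · exact sigmoid_mul_one_sub_nonneg _
    _ = _ := by ring

theorem maxfl_local_smoothness
    {E : Type*} [NormedAddCommGroup E] [NormedSpace ℝ E]
    (F : E → ℝ) (hF : ContDiff ℝ 2 F) (ρ : ℝ) (w : E)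
    (Lc Ls : ℝ) (hLc : 0 ≤ Lc) (hLs : 0 ≤ Ls)
    (h1 : ‖fderiv ℝ F w‖ ≤ Lc)
    (h2 : ‖fderiv ℝ (fderiv ℝ F) w‖ ≤ Ls) :
    ‖fderiv ℝ (fderiv ℝ (fun x => sigmoid (F x - ρ))) w‖
      ≤ Lc ^ 2 / 4 + sigmoid (F w - ρ) * (1 - sigmoid (F w - ρ)) * Ls :=
  maxfl_local_smoothness_general F hF ρ w Lc Ls h1 h2
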